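/- Let Δ be a group containing a free group G = ⟨a, b, c⟩ together with elements d_j (j ∈ ℤ) satisfying: b_i^{d_j} = b_i for i ≥ j, a^{d_j} = a^{b_j}, and b_i^{d_j} = b_i^{b_j} for i < j, where b_i = b^{c^i}. Then for every finitely supported f : ℤ → ℤ and every integer j, one has a_f^{d_j} = a_{f_j^+} and a_f^{d_j^{-1}} = a_{f_j^-}, where f_j^±(i) = f(i) for i ≠ j and f_j^±(j) = f(j) ± 1, and a_f = b_f^{-1} a b_f with b_f = ∏_i b_i^{f(i)} in increasing order of i. -/

import Mathlib

/-!
Conjugation by `d_j` turns `ι` into a homomorphism `τ : G →* Δ` that agrees with `ι` on the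
`b_i`, `i ≥ j`, and with `ι` twisted by `b_j` on `a` and the `b_i`, `i < j`. Splitting
`b_f = b_{f|<j} · b_j^{f(j)} · b_{f|>j}` therefore gives `τ(b_f) = ι(b_j⁻¹ b_{f_j^+})`, and the
factors `b_j` cancel in `τ(a_f) = τ(b_f)⁻¹ τ(a) τ(b_f)`. The claim for `d_j⁻¹` is the same
identity applied to `f_j^-`.
-/

namespace Stmt19

/-- The free group of rank 3 on `a`, `b`, `c`. -/
abbrev F := FreeGroup (Fin 3)

def a : F := FreeGroup.of 0
def b : F := FreeGroup.of 1
def c : F := FreeGroup.of 2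

/-- `b_i = c^{-i} b c^i`. -/
def bi (i : ℤ) : F := c ^ (-i) * b * c ^ i

/-- `b_f`: the product of the `b_i^{f(i)}` in increasing order of `i`. -/
def bf (f : ℤ →₀ ℤ) : F := ((f.support.sort (· ≤ ·)).map fun i => bi i ^ f i).prod

/-- `a_f = b_f⁻¹ a b_f`. -/
def af (f : ℤ →₀ ℤ) : F := (bf f)⁻¹ * a * bf f

theorem _root_.Finset.sort_union_of_forall_lt {α : Type*} [LinearOrder α] {s t : Finset α}
    (h : ∀ x ∈ s, ∀ y ∈ t, x < y) : (s ∪ t).sort = s.sort ++ t.sort := by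
  refine (Finset.sortedLT_sort _).eq_of_mem_iff ?_ fun x => by simp
  refine List.Pairwise.sortedLT <| List.pairwise_append.mpr ⟨(Finset.sortedLT_sort s).pairwise,
    (Finset.sortedLT_sort t).pairwise, fun x hx y hy => ?_⟩
  exact h x ((Finset.mem_sort _).mp hx) y ((Finset.mem_sort _).mp hy)

section OrderedProd

variable {α G H : Type*} [LinearOrder α] [Group G] [Group H]

def orderedProd (v : α → G) (f : α →₀ ℤ) : G :=
  (f.support.sort.map fun i => v i ^ f i).prod

theorem orderedProd_single (v : α → G) (j : α) (n : ℤ) :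
    orderedProd v (Finsupp.single j n) = v j ^ n := by
  by_cases hn : n = 0
  · simp [orderedProd, hn]
  · simp [orderedProd, Finsupp.support_single, hn]

theorem orderedProd_add_of_forall_lt (v : α → G) {f g : α →₀ ℤ}
    (h : ∀ x ∈ f.support, ∀ y ∈ g.support, x < y) :
    orderedProd v (f + g) = orderedProd v f * orderedProd v g := by
  have hdisj : Disjoint f.support g.support :=
    Finset.disjoint_left.mpr fun x hf hg => (h x hf x hg).false
  rw [orderedProd, Finsupp.support_add_eq hdisj, Finset.sort_union_of_forall_lt h,
    List.map_append, List.prod_append]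
  congr 2 <;> refine List.map_congr_left fun i hi => ?_ <;> rw [Finset.mem_sort] at hi
  · rw [Finsupp.add_apply, Finsupp.notMem_support_iff.mp (Finset.disjoint_left.mp hdisj hi),
      add_zero]
  · rw [Finsupp.add_apply, Finsupp.notMem_support_iff.mp (Finset.disjoint_right.mp hdisj hi),
      zero_add]

theorem orderedProd_eq_lt_mul_zpow_mul_gt (v : α → G) (f : α →₀ ℤ) (j : α) :
    orderedProd v f =
      orderedProd v (f.filter (· < j)) * v j ^ f j * orderedProd v (f.filter (j < ·)) := by
  have hsplit : f = f.filter (· < j) + (Finsupp.single j (f j) + f.filter (j < ·)) := by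
    ext i
    rcases lt_trichotomy i j with h | rfl | h
    · simp [h, h.ne, h.not_gt]
    · simp
    · simp [h, h.ne', h.not_gt]
  have hj : ∀ x ∈ (Finsupp.single j (f j)).support, x = j := fun x hx =>
    Finset.mem_singleton.mp (Finsupp.support_single_subset hx)
  conv_lhs => rw [hsplit]
  rw [orderedProd_add_of_forall_lt v, orderedProd_add_of_forall_lt v, orderedProd_single,
    mul_assoc]
  · rintro x hx y hy
    exact (hj x hx).symm ▸ (Finset.mem_filter.mp hy).2
  · rintro x hx y hy
    rcases Finset.mem_union.mp (Finsupp.support_add hy) with hy | hy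
    · exact (hj y hy).symm ▸ (Finset.mem_filter.mp hx).2
    · exact (Finset.mem_filter.mp hx).2.trans (Finset.mem_filter.mp hy).2

theorem map_orderedProd_eq_of_eqOn (φ ψ : G →* H) (v : α → G) (f : α →₀ ℤ)
    (h : ∀ i ∈ f.support, φ (v i) = ψ (v i)) :
    φ (orderedProd v f) = ψ (orderedProd v f) := by
  simp only [orderedProd, map_list_prod, List.map_map]
  congr 1
  refine List.map_congr_left fun i hi => ?_
  simp only [Function.comp_apply, map_zpow, h i (Finset.mem_sort _ |>.mp hi)]

theorem orderedProd_add_single (v : α → G) (f : α →₀ ℤ) (j : α) (n : ℤ) :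
    orderedProd v (f + Finsupp.single j n) =
      orderedProd v (f.filter (· < j)) * v j ^ (f j + n) * orderedProd v (f.filter (j < ·)) := by
  rw [orderedProd_eq_lt_mul_zpow_mul_gt v _ j, Finsupp.filter_add, Finsupp.filter_add,
    Finsupp.filter_single_of_neg (· < j) (lt_irrefl j),
    Finsupp.filter_single_of_neg (j < ·) (lt_irrefl j),
    add_zero, add_zero, Finsupp.add_apply, Finsupp.single_eq_same]

end OrderedProd

theorem bf_eq_orderedProd (f : ℤ →₀ ℤ) : bf f = orderedProd bi f := rfl

theorem map_af_eq_af_add_single {Δ : Type*} [Group Δ] (ι τ : F →* Δ) (j : ℤ)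
    (hge : ∀ i, j ≤ i → τ (bi i) = ι (bi i))
    (hlt : ∀ i, i < j → τ (bi i) = ι ((bi j)⁻¹ * bi i * bi j))
    (ha : τ a = ι ((bi j)⁻¹ * a * bi j)) (f : ℤ →₀ ℤ) :
    τ (af f) = ι (af (f + Finsupp.single j 1)) := by
  set σ : F →* Δ := ι.comp (MulAut.conj (bi j)⁻¹).toMonoidHom
  have hσ : ∀ x, σ x = ι ((bi j)⁻¹ * x * bi j) := fun x => by simp [σ]
  have hbf : τ (bf f) = ι ((bi j)⁻¹ * bf (f + Finsupp.single j 1)) := by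
    have hlower : ∀ i ∈ (f.filter (· < j)).support, τ (bi i) = σ (bi i) := fun i hi =>
      (hlt i (Finset.mem_filter.mp hi).2).trans (hσ _).symm
    have hupper : ∀ i ∈ (f.filter (j < ·)).support, τ (bi i) = ι (bi i) := fun i hi =>
      hge i (Finset.mem_filter.mp hi).2.le
    simp only [bf_eq_orderedProd]
    rw [orderedProd_eq_lt_mul_zpow_mul_gt _ f j, orderedProd_add_single, map_mul, map_mul,
      map_zpow, hge j le_rfl, map_orderedProd_eq_of_eqOn τ σ bi _ hlower,
      map_orderedProd_eq_of_eqOn τ ι bi _ hupper, hσ]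
    simp only [← map_zpow, ← map_mul]
    congr 1
    group
  rw [af, af, map_mul, map_mul, map_inv, hbf, ha]
  simp only [← map_inv, ← map_mul]
  congr 1
  group

theorem conj_af_d_general {Δ : Type*} [Group Δ] (ι : F →* Δ)
    (d : ℤ → Δ)
    (hfix : ∀ i j : ℤ, j ≤ i → (d j)⁻¹ * ι (bi i) * d j = ι (bi i))
    (ha : ∀ j : ℤ, (d j)⁻¹ * ι a * d j = ι ((bi j)⁻¹ * a * bi j))
    (hlt : ∀ i j : ℤ, i < j → (d j)⁻¹ * ι (bi i) * d j = ι ((bi j)⁻¹ * bi i * bi j)) :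
    ∀ (f : ℤ →₀ ℤ) (j : ℤ),
      (d j)⁻¹ * ι (af f) * d j = ι (af (f + Finsupp.single j 1)) ∧
      d j * ι (af f) * (d j)⁻¹ = ι (af (f - Finsupp.single j 1)) := by
  have hconj : ∀ g j, (d j)⁻¹ * ι (af g) * d j = ι (af (g + Finsupp.single j 1)) := by
    intro g j
    set τ : F →* Δ := (MulAut.conj (d j)⁻¹).toMonoidHom.comp ι
    have hτ : ∀ x, τ x = (d j)⁻¹ * ι x * d j := fun x => by simp [τ]
    rw [← hτ]
    exact map_af_eq_af_add_single ι τ j (fun i hi => (hτ _).trans (hfix i j hi))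
      (fun i hi => (hτ _).trans (hlt i j hi)) ((hτ _).trans (ha j)) g
  intro f j
  refine ⟨hconj f j, ?_⟩
  have hpred := hconj (f - Finsupp.single j 1) j
  rw [sub_add_cancel] at hpred
  rw [← hpred]
  group

/-- Let `Δ` be a group containing the free group `G = ⟨a, b, c⟩` (via an embedding
`ι`) together with elements `d_j` (`j ∈ ℤ`) such that `b_i^{d_j} = b_i` for `i ≥ j`,
`a^{d_j} = a^{b_j}`, and `b_i^{d_j} = b_i^{b_j}` for `i < j`. Then for every finitely
supported `f : ℤ → ℤ` and every `j ∈ ℤ`, `a_f^{d_j} = a_{f_j⁺}` and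
`a_f^{d_j⁻¹} = a_{f_j⁻}`, where `f_j^± = f ± single j 1`. -/
theorem conj_af_d {Δ : Type*} [Group Δ] (ι : F →* Δ) (hι : Function.Injective ι)
    (d : ℤ → Δ)
    (hfix : ∀ i j : ℤ, j ≤ i → (d j)⁻¹ * ι (bi i) * d j = ι (bi i))
    (ha : ∀ j : ℤ, (d j)⁻¹ * ι a * d j = ι ((bi j)⁻¹ * a * bi j))
    (hlt : ∀ i j : ℤ, i < j → (d j)⁻¹ * ι (bi i) * d j = ι ((bi j)⁻¹ * bi i * bi j)) :
    ∀ (f : ℤ →₀ ℤ) (j : ℤ),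
      (d j)⁻¹ * ι (af f) * d j = ι (af (f + Finsupp.single j 1)) ∧
      d j * ι (af f) * (d j)⁻¹ = ι (af (f - Finsupp.single j 1)) :=
  conj_af_d_general ι d hfix ha hlt

end Stmt19
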